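/- arXiv:1602.04361 — 2 statements merged into one kernel-verified Lean document; each statement's English description precedes it below -/
import Mathlib

section
/- Let k(x,y) = ∫₀^∞ e^{−t‖x−y‖²} dν(t) be a radial kernel on ℝ^d with ν a finite nonnegative Borel measure on [0,∞), and let θ_0, θ_1 be the kernel mean embeddings of Gaussian measures N(μ_0, σ²I) and N(μ_1, σ²I). Then ‖θ_0 − θ_1‖²_{H_k} = ∫₀^∞ 2 (1 + 4tσ²)^{−d/2} (1 − exp(−t‖μ_0 − μ_1‖² / (1 + 4tσ²))) dν(t). -/
/-!
Since `k` is a `ν`-mixture of the Gaussian kernels `e^{-t‖x-y‖²}`, Fubini reduces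
`⟪θᵢ, θⱼ⟫ = ∫∫ k dGᵢ dGⱼ` to the double Gaussian integral
`∫∫ e^{-t‖y-x‖²} dN(m₀, σ²I)(x) dN(m₁, σ²I)(y) = (1+4tσ²)^{-d/2} e^{-t‖m₀-m₁‖²/(1+4tσ²)}`,
which follows by completing the square twice. Expanding `‖θ₀ - θ₁‖²` gives the formula.
The embeddings exist as Bochner integrals because the feature map is continuous (its kernel is)
and bounded (`‖φ x‖² = ν[0,∞)`).
-/

open MeasureTheory Module Set Real Filter Topology
open scoped RealInnerProductSpace

noncomputable section

section Gaussian

variable {V : Type*} [NormedAddCommGroup V] [InnerProductSpace ℝ V]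

lemma neg_mul_norm_sub_sq_sub_mul_norm_sq {t s : ℝ} (hts : t + s ≠ 0) (y w : V) :
    -(t * ‖y - w‖ ^ 2) - s * ‖y‖ ^ 2
      = -(t + s) * ‖y - (t / (t + s)) • w‖ ^ 2 - t * s / (t + s) * ‖w‖ ^ 2 := by
  rw [norm_sub_sq_real, norm_sub_sq_real, inner_smul_right, norm_smul, mul_pow, Real.norm_eq_abs,
    sq_abs]
  field_simp
  ring

def isotropicGaussianPDF (σ : ℝ) (m x : V) : ℝ :=
  (2 * π * σ ^ 2) ^ (-(finrank ℝ V : ℝ) / 2) * rexp (-‖x - m‖ ^ 2 / (2 * σ ^ 2))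

lemma isotropicGaussianPDF_nonneg (σ : ℝ) (m x : V) : 0 ≤ isotropicGaussianPDF σ m x := by
  unfold isotropicGaussianPDF; positivity

variable [FiniteDimensional ℝ V] [MeasurableSpace V] [BorelSpace V]

def isotropicGaussian (σ : ℝ) (m : V) : Measure V :=
  volume.withDensity fun x => ENNReal.ofReal (isotropicGaussianPDF σ m x)

lemma integral_isotropicGaussian_eq_integral_pdf_mul (σ : ℝ) (m : V) (g : V → ℝ) :
    ∫ x, g x ∂isotropicGaussian σ m = ∫ x, isotropicGaussianPDF σ m x * g x := by
  have hmeas : Measurable fun x => isotropicGaussianPDF σ m x := by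
    unfold isotropicGaussianPDF; fun_prop
  rw [isotropicGaussian, integral_withDensity_eq_integral_toReal_smul hmeas.ennreal_ofReal
    (.of_forall fun _ => ENNReal.ofReal_lt_top)]
  simp only [ENNReal.toReal_ofReal (isotropicGaussianPDF_nonneg σ m _), smul_eq_mul]

lemma integral_isotropicGaussianPDF_mul_exp_neg_mul_norm_sub_sq {σ t : ℝ} (hσ : σ ≠ 0)
    (ht : 0 ≤ t) (m a : V) :
    ∫ x, isotropicGaussianPDF σ m x * rexp (-(t * ‖x - a‖ ^ 2))
      = (1 + 2 * t * σ ^ 2) ^ (-(finrank ℝ V : ℝ) / 2)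
          * rexp (-(t * ‖a - m‖ ^ 2) / (1 + 2 * t * σ ^ 2)) := by
  set s : ℝ := 1 / (2 * σ ^ 2) with hs_def
  have hts : 0 < t + s := by positivity
  have hu : 0 < 1 + 2 * t * σ ^ 2 := by positivity
  have hshift : ∀ y : V, isotropicGaussianPDF σ m (y + m) * rexp (-(t * ‖y + m - a‖ ^ 2))
      = (2 * π * σ ^ 2) ^ (-(finrank ℝ V : ℝ) / 2) * rexp (-(t * s / (t + s) * ‖a - m‖ ^ 2))
          * rexp (-(t + s) * ‖y - (t / (t + s)) • (a - m)‖ ^ 2) := by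
    intro y
    have key := neg_mul_norm_sub_sq_sub_mul_norm_sq hts.ne' y (a - m)
    rw [isotropicGaussianPDF, add_sub_cancel_right, show y + m - a = y - (a - m) by abel,
      mul_assoc, ← Real.exp_add, mul_assoc ((2 * π * σ ^ 2) ^ (-(finrank ℝ V : ℝ) / 2)),
      ← Real.exp_add]
    congr 2
    linear_combination key + ‖y‖ ^ 2 * hs_def
  rw [← integral_add_right_eq_self _ m]
  simp_rw [hshift]
  rw [integral_const_mul, integral_sub_right_eq_self (fun y => rexp (-(t + s) * ‖y‖ ^ 2)),
    GaussianFourier.integral_rexp_neg_mul_sq_norm hts]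
  have hπ : π / (t + s) = 2 * π * σ ^ 2 / (1 + 2 * t * σ ^ 2) := by
    rw [hs_def]; field_simp; ring
  have hexp : -(t * s / (t + s) * ‖a - m‖ ^ 2) = -(t * ‖a - m‖ ^ 2) / (1 + 2 * t * σ ^ 2) := by
    rw [hs_def]; field_simp; ring
  have h2πσ : 0 < 2 * π * σ ^ 2 := by positivity
  rw [hπ, hexp, div_rpow h2πσ.le hu.le, neg_div, rpow_neg h2πσ.le, rpow_neg hu.le]
  field_simp

lemma integral_isotropicGaussianPDF {σ : ℝ} (hσ : σ ≠ 0) (m : V) :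
    ∫ x, isotropicGaussianPDF σ m x = 1 := by
  simpa using integral_isotropicGaussianPDF_mul_exp_neg_mul_norm_sub_sq hσ le_rfl m m

lemma isProbabilityMeasure_isotropicGaussian {σ : ℝ} (hσ : σ ≠ 0) (m : V) :
    IsProbabilityMeasure (isotropicGaussian σ m) := by
  have hint : Integrable (isotropicGaussianPDF σ m) :=
    .of_integral_ne_zero (by rw [integral_isotropicGaussianPDF hσ]; exact one_ne_zero)
  constructor
  rw [isotropicGaussian, withDensity_apply _ MeasurableSet.univ, Measure.restrict_univ,
    ← ofReal_integral_eq_lintegral_ofReal hint (.of_forall (isotropicGaussianPDF_nonneg σ m)),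
    integral_isotropicGaussianPDF hσ, ENNReal.ofReal_one]

lemma integral_exp_neg_mul_norm_sub_sq_isotropicGaussian {σ t : ℝ} (hσ : σ ≠ 0) (ht : 0 ≤ t)
    (m a : V) :
    ∫ x, rexp (-(t * ‖a - x‖ ^ 2)) ∂isotropicGaussian σ m
      = (1 + 2 * t * σ ^ 2) ^ (-(finrank ℝ V : ℝ) / 2)
          * rexp (-(t / (1 + 2 * t * σ ^ 2) * ‖m - a‖ ^ 2)) := by
  simp_rw [integral_isotropicGaussian_eq_integral_pdf_mul, norm_sub_rev a,
    integral_isotropicGaussianPDF_mul_exp_neg_mul_norm_sub_sq hσ ht, norm_sub_rev a, neg_div,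
    mul_div_right_comm]

lemma integral_integral_exp_neg_mul_norm_sub_sq_isotropicGaussian {σ t : ℝ} (hσ : σ ≠ 0)
    (ht : 0 ≤ t) (m₀ m₁ : V) :
    ∫ y, ∫ x, rexp (-(t * ‖y - x‖ ^ 2)) ∂isotropicGaussian σ m₀ ∂isotropicGaussian σ m₁
      = (1 + 4 * t * σ ^ 2) ^ (-(finrank ℝ V : ℝ) / 2)
          * rexp (-(t * ‖m₀ - m₁‖ ^ 2) / (1 + 4 * t * σ ^ 2)) := by
  have hu : 0 < 1 + 2 * t * σ ^ 2 := by positivity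
  have ht' : 0 ≤ t / (1 + 2 * t * σ ^ 2) := by positivity
  have hu' : 1 + 2 * (t / (1 + 2 * t * σ ^ 2)) * σ ^ 2
      = (1 + 4 * t * σ ^ 2) / (1 + 2 * t * σ ^ 2) := by
    field_simp; ring
  simp_rw [integral_exp_neg_mul_norm_sub_sq_isotropicGaussian hσ ht]
  rw [integral_const_mul, integral_exp_neg_mul_norm_sub_sq_isotropicGaussian hσ ht', hu',
    ← mul_assoc, ← mul_rpow hu.le (by positivity), mul_div_cancel₀ _ hu.ne']
  congr 2
  rw [norm_sub_rev]
  field_simp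

end Gaussian

section FeatureMap

variable {X H : Type*} [NormedAddCommGroup H] [InnerProductSpace ℝ H] {φ : X → H}

theorem continuous_of_continuous_inner [TopologicalSpace X]
    (h : Continuous fun p : X × X => ⟪φ p.1, φ p.2⟫) : Continuous φ := by
  refine continuous_iff_continuousAt.2 fun x => ?_
  have hsq : Tendsto (fun y => ‖φ y - φ x‖ ^ 2) (𝓝 x) (𝓝 0) := by
    have hy : Tendsto (fun y => (y, y)) (𝓝 x) (𝓝 (x, x)) :=
      (continuous_id.prodMk continuous_id).tendsto x
    have hyx : Tendsto (fun y => (y, x)) (𝓝 x) (𝓝 (x, x)) :=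
      (continuous_id.prodMk continuous_const).tendsto x
    have hlim := ((h.tendsto _).comp hy).sub (((h.tendsto _).comp hyx).const_mul 2)
      |>.add (tendsto_const_nhds (x := ⟪φ x, φ x⟫))
    simp only [Function.comp_def] at hlim
    convert hlim using 2 with y
    · rw [norm_sub_sq_real, real_inner_self_eq_norm_sq, real_inner_self_eq_norm_sq]
    · ring
  rw [ContinuousAt, tendsto_iff_norm_sub_tendsto_zero]
  simpa [Function.comp_def, sqrt_sq (norm_nonneg _)] using (continuous_sqrt.tendsto 0).comp hsq

theorem inner_integral_integral [CompleteSpace H] [MeasurableSpace X] {P Q : Measure X}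
    (hP : Integrable φ P) (hQ : Integrable φ Q) :
    ⟪∫ x, φ x ∂P, ∫ x, φ x ∂Q⟫ = ∫ y, ∫ x, ⟪φ y, φ x⟫ ∂P ∂Q := by
  rw [← integral_inner hQ]
  congr 1 with y
  rw [real_inner_comm, ← integral_inner hP]

end FeatureMap

section GaussianMixtureKernel

variable {E : Type*} [NormedAddCommGroup E]

def gaussianMixtureKernel (ν : Measure ℝ) (x y : E) : ℝ :=
  ∫ t in Ici 0, rexp (-(t * ‖x - y‖ ^ 2)) ∂ν

lemma norm_exp_neg_mul_sq_le_one {t : ℝ} (ht : 0 ≤ t) (r : ℝ) : ‖rexp (-(t * r ^ 2))‖ ≤ 1 := by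
  rw [norm_of_nonneg (exp_nonneg _), exp_le_one_iff, neg_nonpos]
  positivity

variable (ν : Measure ℝ)

lemma gaussianMixtureKernel_self (x : E) : gaussianMixtureKernel ν x x = ν.real (Ici 0) := by
  simp [gaussianMixtureKernel]

lemma continuous_gaussianMixtureKernel [IsFiniteMeasure ν] :
    Continuous fun p : E × E => gaussianMixtureKernel ν p.1 p.2 :=
  continuous_of_dominated (fun _ => Continuous.aestronglyMeasurable (by fun_prop))
    (fun _ => (ae_restrict_mem measurableSet_Ici).mono fun _ ht => norm_exp_neg_mul_sq_le_one ht _)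
    (integrable_const 1) (.of_forall fun _ => by fun_prop)

variable [MeasurableSpace E] [BorelSpace E] [SecondCountableTopology E]

lemma integral_integral_gaussianMixtureKernel [IsFiniteMeasure ν] (P Q : Measure E)
    [IsFiniteMeasure P] [IsFiniteMeasure Q] :
    ∫ y, ∫ x, gaussianMixtureKernel ν y x ∂P ∂Q
      = ∫ t in Ici 0, ∫ y, ∫ x, rexp (-(t * ‖y - x‖ ^ 2)) ∂P ∂Q ∂ν := by
  set F : (E × E) × ℝ → ℝ := fun p => rexp (-(p.2 * ‖p.1.1 - p.1.2‖ ^ 2))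
  have hF : Integrable F ((Q.prod P).prod (ν.restrict (Ici 0))) := by
    refine .of_bound (Continuous.aestronglyMeasurable (by fun_prop)) 1 ?_
    filter_upwards [Measure.quasiMeasurePreserving_snd.ae (ae_restrict_mem measurableSet_Ici)]
      with p hp using norm_exp_neg_mul_sq_le_one hp _
  calc ∫ y, ∫ x, gaussianMixtureKernel ν y x ∂P ∂Q
      = ∫ z, ∫ t in Ici 0, F (z, t) ∂ν ∂Q.prod P :=
        (integral_prod _ hF.integral_prod_left).symm
    _ = ∫ t in Ici 0, ∫ z, F (z, t) ∂Q.prod P ∂ν := integral_integral_swap hF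
    _ = _ := by
        refine integral_congr_ae ((ae_restrict_mem measurableSet_Ici).mono fun t ht => ?_)
        exact integral_prod _ (.of_bound (Continuous.aestronglyMeasurable (by fun_prop)) 1
          (.of_forall fun z => norm_exp_neg_mul_sq_le_one ht _))

lemma integrable_of_inner_eq_gaussianMixtureKernel {H : Type*} [NormedAddCommGroup H]
    [InnerProductSpace ℝ H] [IsFiniteMeasure ν] {φ : E → H}
    (hφ : ∀ x y, ⟪φ x, φ y⟫ = gaussianMixtureKernel ν x y) (P : Measure E) [IsFiniteMeasure P] :
    Integrable φ P := by
  have hcont : Continuous φ :=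
    continuous_of_continuous_inner (by simpa only [hφ] using continuous_gaussianMixtureKernel ν)
  refine .of_bound hcont.aestronglyMeasurable √(ν.real (Ici 0)) (.of_forall fun x => le_of_eq ?_)
  rw [← gaussianMixtureKernel_self ν x, ← hφ, real_inner_self_eq_norm_sq, sqrt_sq (norm_nonneg _)]

end GaussianMixtureKernel

lemma integrableOn_rpow_mul_exp_neg_div (ν : Measure ℝ) [IsFiniteMeasure ν] (n : ℕ) (σ : ℝ)
    {r : ℝ} (hr : 0 ≤ r) :
    IntegrableOn (fun t => (1 + 4 * t * σ ^ 2) ^ (-(n : ℝ) / 2)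
      * rexp (-(t * r) / (1 + 4 * t * σ ^ 2))) (Ici 0) ν := by
  refine .of_bound (measure_lt_top _ _) (Measurable.aestronglyMeasurable (by fun_prop)) 1
    ((ae_restrict_mem measurableSet_Ici).mono fun t (ht : 0 ≤ t) => ?_)
  have hu : 1 ≤ 1 + 4 * t * σ ^ 2 := le_add_of_nonneg_right (by positivity)
  rw [norm_mul, norm_of_nonneg (by positivity), norm_of_nonneg (exp_nonneg _)]
  refine mul_le_one₀ (rpow_le_one_of_one_le_of_nonpos hu ?_) (exp_nonneg _) (exp_le_one_iff.2 ?_)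
  · rw [neg_div, neg_nonpos]; positivity
  · rw [neg_div, neg_nonpos]; positivity

theorem inner_integral_isotropicGaussian {V H : Type*} [NormedAddCommGroup V]
    [InnerProductSpace ℝ V] [FiniteDimensional ℝ V] [MeasurableSpace V] [BorelSpace V]
    [NormedAddCommGroup H] [InnerProductSpace ℝ H] [CompleteSpace H]
    (ν : Measure ℝ) [IsFiniteMeasure ν] {φ : V → H}
    (hφ : ∀ x y, ⟪φ x, φ y⟫ = gaussianMixtureKernel ν x y) {σ : ℝ} (hσ : σ ≠ 0) (m₀ m₁ : V) :
    ⟪∫ x, φ x ∂isotropicGaussian σ m₀, ∫ x, φ x ∂isotropicGaussian σ m₁⟫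
      = ∫ t in Ici 0, (1 + 4 * t * σ ^ 2) ^ (-(finrank ℝ V : ℝ) / 2)
          * rexp (-(t * ‖m₀ - m₁‖ ^ 2) / (1 + 4 * t * σ ^ 2)) ∂ν := by
  have := isProbabilityMeasure_isotropicGaussian hσ m₀
  have := isProbabilityMeasure_isotropicGaussian hσ m₁
  rw [inner_integral_integral (integrable_of_inner_eq_gaussianMixtureKernel ν hφ _)
    (integrable_of_inner_eq_gaussianMixtureKernel ν hφ _)]
  simp_rw [hφ]
  rw [integral_integral_gaussianMixtureKernel]
  exact setIntegral_congr_fun measurableSet_Ici fun t ht =>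
    integral_integral_exp_neg_mul_norm_sub_sq_isotropicGaussian hσ ht m₀ m₁

end

theorem rkhs_dist_gaussian_embeddings_radial_general (d : ℕ)
    (ν : Measure ℝ) [IsFiniteMeasure ν]
    (H : Type*) [NormedAddCommGroup H] [InnerProductSpace ℝ H] [CompleteSpace H]
    (φ : EuclideanSpace ℝ (Fin d) → H)
    (hφ : ∀ x y, @inner ℝ _ _ (φ x) (φ y) =
      ∫ t in Set.Ici (0 : ℝ), Real.exp (-(t * ‖x - y‖ ^ 2)) ∂ν)
    (μ₀ μ₁ : EuclideanSpace ℝ (Fin d)) (σ : ℝ) (hσ : 0 < σ)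
    (G₀ G₁ : Measure (EuclideanSpace ℝ (Fin d)))
    (hG₀ : G₀ = (volume : Measure (EuclideanSpace ℝ (Fin d))).withDensity
      (fun x => ENNReal.ofReal ((2 * Real.pi * σ ^ 2) ^ (-(d : ℝ) / 2) *
        Real.exp (-‖x - μ₀‖ ^ 2 / (2 * σ ^ 2)))))
    (hG₁ : G₁ = (volume : Measure (EuclideanSpace ℝ (Fin d))).withDensity
      (fun x => ENNReal.ofReal ((2 * Real.pi * σ ^ 2) ^ (-(d : ℝ) / 2) *
        Real.exp (-‖x - μ₁‖ ^ 2 / (2 * σ ^ 2))))) :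
    ‖(∫ x, φ x ∂G₀) - ∫ x, φ x ∂G₁‖ ^ 2 =
      ∫ t in Set.Ici (0 : ℝ),
        2 * (1 + 4 * t * σ ^ 2) ^ (-(d : ℝ) / 2) *
          (1 - Real.exp (-(t * ‖μ₀ - μ₁‖ ^ 2) / (1 + 4 * t * σ ^ 2))) ∂ν := by
  have hG (m : EuclideanSpace ℝ (Fin d)) : isotropicGaussian σ m = volume.withDensity
      (fun x => ENNReal.ofReal ((2 * π * σ ^ 2) ^ (-(d : ℝ) / 2) *
        rexp (-‖x - m‖ ^ 2 / (2 * σ ^ 2)))) := by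
    simp only [isotropicGaussian, isotropicGaussianPDF, finrank_euclideanSpace_fin]
  rw [← hG] at hG₀ hG₁
  subst hG₀ hG₁
  have hinner (m m' : EuclideanSpace ℝ (Fin d)) := inner_integral_isotropicGaussian ν hφ hσ.ne' m m'
  rw [finrank_euclideanSpace_fin] at hinner
  have hint (w : EuclideanSpace ℝ (Fin d)) :=
    (integrableOn_rpow_mul_exp_neg_div ν d σ (sq_nonneg ‖w‖)).const_mul 2
  rw [norm_sub_sq_real, ← real_inner_self_eq_norm_sq, ← real_inner_self_eq_norm_sq, hinner,
    hinner, hinner, sub_self, sub_self, sub_add_eq_add_sub, ← two_mul, ← integral_const_mul,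
    ← integral_const_mul, ← integral_sub (hint 0) (hint (μ₀ - μ₁))]
  refine setIntegral_congr_fun measurableSet_Ici fun t _ => ?_
  rw [norm_zero, zero_pow two_ne_zero, mul_zero, neg_zero, zero_div, exp_zero]
  ring

/-- For a radial kernel k(x,y) = ∫₀^∞ e^{-t‖x-y‖²} dν(t), the squared RKHS
distance between the kernel mean embeddings of N(μ₀, σ²I) and N(μ₁, σ²I) is
∫₀^∞ 2 (1+4tσ²)^{-d/2} (1 - exp(-t‖μ₀-μ₁‖²/(1+4tσ²))) dν(t). -/
theorem rkhs_dist_gaussian_embeddings_radial (d : ℕ)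
    (ν : Measure ℝ) [IsFiniteMeasure ν] (hν : ν (Set.Iio 0) = 0)
    (H : Type*) [NormedAddCommGroup H] [InnerProductSpace ℝ H] [CompleteSpace H]
    (φ : EuclideanSpace ℝ (Fin d) → H)
    (hφ : ∀ x y, @inner ℝ _ _ (φ x) (φ y) =
      ∫ t in Set.Ici (0 : ℝ), Real.exp (-(t * ‖x - y‖ ^ 2)) ∂ν)
    (μ₀ μ₁ : EuclideanSpace ℝ (Fin d)) (σ : ℝ) (hσ : 0 < σ)
    (G₀ G₁ : Measure (EuclideanSpace ℝ (Fin d)))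
    (hG₀ : G₀ = (volume : Measure (EuclideanSpace ℝ (Fin d))).withDensity
      (fun x => ENNReal.ofReal ((2 * Real.pi * σ ^ 2) ^ (-(d : ℝ) / 2) *
        Real.exp (-‖x - μ₀‖ ^ 2 / (2 * σ ^ 2)))))
    (hG₁ : G₁ = (volume : Measure (EuclideanSpace ℝ (Fin d))).withDensity
      (fun x => ENNReal.ofReal ((2 * Real.pi * σ ^ 2) ^ (-(d : ℝ) / 2) *
        Real.exp (-‖x - μ₁‖ ^ 2 / (2 * σ ^ 2))))) :
    ‖(∫ x, φ x ∂G₀) - ∫ x, φ x ∂G₁‖ ^ 2 =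
      ∫ t in Set.Ici (0 : ℝ),
        2 * (1 + 4 * t * σ ^ 2) ^ (-(d : ℝ) / 2) *
          (1 - Real.exp (-(t * ‖μ₀ - μ₁‖ ^ 2) / (1 + 4 * t * σ ^ 2))) ∂ν :=
  rkhs_dist_gaussian_embeddings_radial_general d ν H φ hφ μ₀ μ₁ σ hσ G₀ G₁ hG₀ hG₁
end

section
/- Let ν be a finite nonnegative Borel measure on [0,∞) satisfying ∫₀^∞ t^{−d/2} dν(t) < ∞, and let ψ_ν(x) = ∫₀^∞ e^{−t‖x‖²} dν(t). Then for all z ∈ ℝ^d, ‖ψ_ν‖²_{L²(ℝ^d)} − ∫_{ℝ^d} ψ_ν(y)ψ_ν(y+z) dy = ∫₀^∞∫₀^∞ (π/(t₁+t₂))^{d/2} (1 − exp(−t₁t₂‖z‖²/(t₁+t₂))) dν(t₁) dν(t₂). -/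
/-!
Writing `ψ(y) ψ(y + z)` as a `ν ⊗ ν`-integral and integrating in `y` first, the Gaussian
convolution identity gives
`∫ ψ(y) ψ(y + z) dy = ∫∫ (π / (t₁ + t₂))^{d/2} e^{-t₁ t₂ ‖z‖² / (t₁ + t₂)} dν dν`;
the theorem is the difference of this at `0` and at `z`. Fubini applies because
`t₁ t₂ ≤ (t₁ + t₂)²` bounds the kernel by `π^{d/2} t₁^{-d/4} t₂^{-d/4}`, which is
`ν ⊗ ν`-integrable by the moment condition.
-/

open MeasureTheory Real Module

section Gaussian

variable {V : Type*} [NormedAddCommGroup V] [InnerProductSpace ℝ V]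

lemma mul_sq_norm_add_mul_sq_norm_add {t₁ t₂ : ℝ} (hs : t₁ + t₂ ≠ 0) (y w : V) :
    t₁ * ‖y‖ ^ 2 + t₂ * ‖y + w‖ ^ 2 =
      (t₁ + t₂) * ‖y + (t₂ / (t₁ + t₂)) • w‖ ^ 2 + t₁ * t₂ * ‖w‖ ^ 2 / (t₁ + t₂) := by
  rw [norm_add_sq_real, norm_add_sq_real, real_inner_smul_right, norm_smul, Real.norm_eq_abs,
    mul_pow, sq_abs]
  field_simp
  ring

variable [FiniteDimensional ℝ V] [MeasurableSpace V] [BorelSpace V]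

lemma integrable_exp_neg_mul_sq_norm {b : ℝ} (hb : 0 < b) :
    Integrable (fun v : V => rexp (-(b * ‖v‖ ^ 2))) := by
  refine (GaussianFourier.integrable_cexp_neg_mul_sq_norm_add (V := V)
    (b := (b : ℂ)) (by simpa using hb) 0 0).norm.congr (.of_forall fun v => ?_)
  simp [Complex.norm_exp, ← Complex.ofReal_pow, ← Complex.ofReal_mul, neg_mul]

lemma integral_exp_neg_mul_sq_norm_mul_exp_neg_mul_sq_norm_add {t₁ t₂ : ℝ} (hs : 0 < t₁ + t₂)
    (w : V) :
    ∫ y : V, rexp (-(t₁ * ‖y‖ ^ 2)) * rexp (-(t₂ * ‖y + w‖ ^ 2)) =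
      (π / (t₁ + t₂)) ^ (finrank ℝ V / 2 : ℝ) * rexp (-(t₁ * t₂ * ‖w‖ ^ 2) / (t₁ + t₂)) := by
  simp_rw [← Real.exp_add, ← neg_add, mul_sq_norm_add_mul_sq_norm_add hs.ne', neg_add,
    Real.exp_add, integral_mul_const, neg_div]
  rw [integral_add_right_eq_self (fun y : V => rexp (-((t₁ + t₂) * ‖y‖ ^ 2))),
    ← GaussianFourier.integral_rexp_neg_mul_sq_norm hs]
  simp only [neg_mul]

end Gaussian

lemma div_add_rpow_le {c t₁ t₂ s : ℝ} (hc : 0 ≤ c) (ht₁ : 0 < t₁) (ht₂ : 0 < t₂) (hs : 0 ≤ s) :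
    (c / (t₁ + t₂)) ^ s ≤ c ^ s * (t₁ ^ (-s / 2) * t₂ ^ (-s / 2)) := by
  have hprod : t₁ * t₂ ≤ (t₁ + t₂) ^ 2 := by nlinarith
  calc (c / (t₁ + t₂)) ^ s = c ^ s * ((t₁ + t₂) ^ 2) ^ (-s / 2) := by
        rw [Real.div_rpow hc (by positivity), div_eq_mul_inv, ← Real.rpow_neg (by positivity),
          ← Real.rpow_natCast_mul (by positivity)]
        push_cast; ring_nf
    _ ≤ c ^ s * (t₁ * t₂) ^ (-s / 2) := by
        gcongr c ^ s * ?_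
        exact Real.rpow_le_rpow_of_nonpos (by positivity) hprod (by linarith)
    _ = c ^ s * (t₁ ^ (-s / 2) * t₂ ^ (-s / 2)) := by
        rw [Real.mul_rpow ht₁.le ht₂.le]

lemma integrable_rpow_neg_of_le {μ : Measure ℝ} [IsFiniteMeasure μ] (hpos : ∀ᵐ t ∂μ, 0 < t)
    {a b : ℝ} (hb : 0 ≤ b) (hba : b ≤ a) (ha : Integrable (fun t => t ^ (-a)) μ) :
    Integrable (fun t => t ^ (-b)) μ := by
  refine (ha.add (integrable_const 1)).mono' (by fun_prop) ?_
  filter_upwards [hpos] with t ht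
  rw [Pi.add_apply, Real.norm_of_nonneg (by positivity)]
  rcases le_or_gt 1 t with h1 | h1
  · linarith [Real.rpow_le_one_of_one_le_of_nonpos h1 (neg_nonpos.2 hb),
      Real.rpow_nonneg ht.le (-a)]
  · linarith [Real.rpow_le_rpow_of_exponent_ge ht h1.le (neg_le_neg hba)]

noncomputable def gaussianOverlap (s c : ℝ) (p : ℝ × ℝ) : ℝ :=
  (π / (p.1 + p.2)) ^ s * rexp (-(p.1 * p.2 * c) / (p.1 + p.2))

lemma ae_prod_pos {μ : Measure ℝ} [SFinite μ] (hpos : ∀ᵐ t ∂μ, 0 < t) :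
    ∀ᵐ p ∂μ.prod μ, 0 < p.1 ∧ 0 < p.2 :=
  (Measure.quasiMeasurePreserving_fst.ae hpos).and (Measure.quasiMeasurePreserving_snd.ae hpos)

section Overlap

variable {μ : Measure ℝ} [IsFiniteMeasure μ]

lemma integrable_gaussianOverlap (hpos : ∀ᵐ t ∂μ, 0 < t) {s : ℝ} (hs : 0 ≤ s)
    (hmom : Integrable (fun t => t ^ (-s)) μ) {c : ℝ} (hc : 0 ≤ c) :
    Integrable (gaussianOverlap s c) (μ.prod μ) := by
  have hhalf : Integrable (fun t => t ^ (-s / 2)) μ := by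
    rw [neg_div]; exact integrable_rpow_neg_of_le hpos (by linarith) (by linarith) hmom
  refine ((hhalf.mul_prod hhalf).const_mul (π ^ s)).mono'
    (by unfold gaussianOverlap; fun_prop) ?_
  filter_upwards [ae_prod_pos hpos] with p ⟨h₁, h₂⟩
  have hexp : rexp (-(p.1 * p.2 * c) / (p.1 + p.2)) ≤ 1 :=
    Real.exp_le_one_iff.2 (div_nonpos_of_nonpos_of_nonneg (by simp only [neg_nonpos]; positivity)
      (by positivity))
  rw [gaussianOverlap, Real.norm_of_nonneg (by positivity)]
  exact (mul_le_of_le_one_right (by positivity) hexp).trans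
    (div_add_rpow_le pi_pos.le h₁ h₂ hs)

variable {V : Type*} [NormedAddCommGroup V] [InnerProductSpace ℝ V] [FiniteDimensional ℝ V]
  [MeasurableSpace V] [BorelSpace V]

lemma integrable_exp_mul_exp_shift_prod (hpos : ∀ᵐ t ∂μ, 0 < t)
    (hmom : Integrable (fun t => t ^ (-(finrank ℝ V / 2 : ℝ))) μ) (w : V) :
    Integrable (Function.uncurry fun (p : ℝ × ℝ) (y : V) =>
      rexp (-(p.1 * ‖y‖ ^ 2)) * rexp (-(p.2 * ‖y + w‖ ^ 2))) ((μ.prod μ).prod volume) := by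
  rw [integrable_prod_iff (by unfold Function.uncurry; fun_prop)]
  constructor
  · filter_upwards [ae_prod_pos hpos] with p ⟨h₁, h₂⟩
    refine (integrable_exp_neg_mul_sq_norm h₁).mono' (by fun_prop) (.of_forall fun y => ?_)
    rw [Function.uncurry_apply_pair, Real.norm_of_nonneg (by positivity)]
    exact mul_le_of_le_one_right (by positivity)
      (Real.exp_le_one_iff.2 (by simp only [neg_nonpos]; positivity))
  · refine (integrable_gaussianOverlap hpos (by positivity) hmom (sq_nonneg ‖w‖)).congr ?_
    filter_upwards [ae_prod_pos hpos] with p ⟨h₁, h₂⟩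
    simp only [Function.uncurry_apply_pair, norm_mul, Real.norm_of_nonneg (Real.exp_pos _).le]
    rw [integral_exp_neg_mul_sq_norm_mul_exp_neg_mul_sq_norm_add (by positivity), gaussianOverlap]

lemma integral_mul_comp_add (hpos : ∀ᵐ t ∂μ, 0 < t)
    (hmom : Integrable (fun t => t ^ (-(finrank ℝ V / 2 : ℝ))) μ) {ψ : V → ℝ}
    (hψ : ∀ x, ψ x = ∫ t, rexp (-(t * ‖x‖ ^ 2)) ∂μ) (w : V) :
    ∫ y, ψ y * ψ (y + w) = ∫ p, gaussianOverlap (finrank ℝ V / 2) (‖w‖ ^ 2) p ∂μ.prod μ := by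
  calc ∫ y, ψ y * ψ (y + w)
      = ∫ y, ∫ p, rexp (-(p.1 * ‖y‖ ^ 2)) * rexp (-(p.2 * ‖y + w‖ ^ 2)) ∂μ.prod μ := by
        simp_rw [hψ, ← integral_prod_mul]
    _ = ∫ p, (∫ y, rexp (-(p.1 * ‖y‖ ^ 2)) * rexp (-(p.2 * ‖y + w‖ ^ 2))) ∂μ.prod μ :=
        (integral_integral_swap (integrable_exp_mul_exp_shift_prod hpos hmom w)).symm
    _ = ∫ p, gaussianOverlap (finrank ℝ V / 2) (‖w‖ ^ 2) p ∂μ.prod μ := by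
        refine integral_congr_ae ?_
        filter_upwards [ae_prod_pos hpos] with p ⟨h₁, h₂⟩
        exact integral_exp_neg_mul_sq_norm_mul_exp_neg_mul_sq_norm_add (by positivity) w

end Overlap

theorem l2_radial_shift_identity_general (d : ℕ)
    (ν : Measure ℝ) [IsFiniteMeasure ν]
    (hν0 : ν {0} = 0)
    (hmom : IntegrableOn (fun t : ℝ => t ^ (-(d : ℝ) / 2)) (Set.Ici 0) ν)
    (ψ : EuclideanSpace ℝ (Fin d) → ℝ)
    (hψ : ∀ x, ψ x = ∫ t in Set.Ici (0 : ℝ), Real.exp (-(t * ‖x‖ ^ 2)) ∂ν)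
    (z : EuclideanSpace ℝ (Fin d)) :
    (∫ y, (ψ y) ^ 2) - ∫ y, ψ y * ψ (y + z) =
      ∫ t₁ in Set.Ici (0 : ℝ), ∫ t₂ in Set.Ici (0 : ℝ),
        (Real.pi / (t₁ + t₂)) ^ ((d : ℝ) / 2) *
          (1 - Real.exp (-(t₁ * t₂ * ‖z‖ ^ 2) / (t₁ + t₂))) ∂ν ∂ν := by
  -- `ν {0} = 0` lets us integrate over `(0, ∞)`, where every `e^{-t‖y‖²}` is integrable in `y`.
  have hμ : ν.restrict (Set.Ioi 0) = ν.restrict (Set.Ici 0) :=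
    Measure.restrict_congr_set (Ioi_ae_eq_Ici' hν0)
  have hpos : ∀ᵐ t ∂ν.restrict (Set.Ioi 0), 0 < t := ae_restrict_mem measurableSet_Ioi
  have hmom' : Integrable (fun t => t ^ (-(finrank ℝ (EuclideanSpace ℝ (Fin d)) / 2 : ℝ)))
      (ν.restrict (Set.Ioi 0)) := by
    rwa [hμ, finrank_euclideanSpace_fin, ← neg_div]
  rw [← hμ] at hψ ⊢
  have hint (w : EuclideanSpace ℝ (Fin d)) := integrable_gaussianOverlap hpos (by positivity)
    hmom' (sq_nonneg ‖w‖)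
  have hsq : ∫ y, ψ y ^ 2 = ∫ y, ψ y * ψ (y + 0) := by simp only [add_zero, sq]
  rw [hsq, integral_mul_comp_add hpos hmom' hψ, integral_mul_comp_add hpos hmom' hψ,
    ← integral_sub (hint 0) (hint z), integral_prod (fun p => _ - _) ((hint 0).sub (hint z))]
  simp [gaussianOverlap, mul_sub]

/-- For ψ_ν(x) = ∫₀^∞ e^{-t‖x‖²} dν(t) with ν finite and
∫₀^∞ t^{-d/2} dν(t) < ∞, for every z:
‖ψ_ν‖²_{L²} − ∫ ψ_ν(y)ψ_ν(y+z) dy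
  = ∫₀^∞∫₀^∞ (π/(t₁+t₂))^{d/2} (1 − e^{-t₁t₂‖z‖²/(t₁+t₂)}) dν(t₁) dν(t₂). -/
theorem l2_radial_shift_identity (d : ℕ)
    (ν : Measure ℝ) [IsFiniteMeasure ν]
    (hν : ν (Set.Iio 0) = 0) (hν0 : ν {0} = 0)
    (hmom : IntegrableOn (fun t : ℝ => t ^ (-(d : ℝ) / 2)) (Set.Ici 0) ν)
    (ψ : EuclideanSpace ℝ (Fin d) → ℝ)
    (hψ : ∀ x, ψ x = ∫ t in Set.Ici (0 : ℝ), Real.exp (-(t * ‖x‖ ^ 2)) ∂ν)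
    (z : EuclideanSpace ℝ (Fin d)) :
    (∫ y, (ψ y) ^ 2) - ∫ y, ψ y * ψ (y + z) =
      ∫ t₁ in Set.Ici (0 : ℝ), ∫ t₂ in Set.Ici (0 : ℝ),
        (Real.pi / (t₁ + t₂)) ^ ((d : ℝ) / 2) *
          (1 - Real.exp (-(t₁ * t₂ * ‖z‖ ^ 2) / (t₁ + t₂))) ∂ν ∂ν :=
  l2_radial_shift_identity_general d ν hν0 hmom ψ hψ z
end
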